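/- arXiv:2410.05967 — 8 statements merged into one kernel-verified Lean document; each statement's English description precedes it below -/
import Mathlib

section
/- Let A be a C*-algebra, D ⊂ A a commutative C*-subalgebra, and Φ : A → D a positive linear map. Then for every positive element a of A, the image under Φ of the hereditary C*-subalgebra generated by a is contained in the hereditary C*-subalgebra generated by Φ(a). -/
/-!
If `0 ≤ x ≤ b`, the contractions `g = b (δ + b)⁻¹` satisfy `g x g ∈ b A b` and
`‖x - g x g‖ ^ 2 ≤ 4 ‖x‖ δ`, so `x ∈ her b`. For `y ≥ 0` one has `a y a ≤ r • a` for a real `r`,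
hence `0 ≤ Φ (a y a) ≤ r • Φ a` and `Φ (a y a) ∈ her (Φ a)`. Positive elements span `A`,
positive maps are continuous and `her (Φ a)` is a closed subspace, so this extends from `a A a`
to its closure.
-/

/-- The hereditary C*-subalgebra of `A` generated by a positive element `a`,
as a set: the norm closure of `a A a`. -/
def herSet {A : Type*} [CStarAlgebra A] (a : A) : Set A :=
  closure {x : A | ∃ y : A, x = a * y * a}

lemma norm_sub_conj_le {R : Type*} [NormedRing R] [StarRing R] [CStarRing R] {x g : R}
    (hx : IsSelfAdjoint x) (hg : IsSelfAdjoint g) (hg_norm : ‖g‖ ≤ 1) :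
    ‖x - g * x * g‖ ≤ 2 * ‖x * (1 - g)‖ := by
  have hstar : ‖(1 - g) * x‖ = ‖x * (1 - g)‖ := by
    rw [← norm_star, star_mul, hx.star_eq, star_sub, star_one, hg.star_eq]
  calc ‖x - g * x * g‖ = ‖(1 - g) * x + g * (x * (1 - g))‖ := by noncomm_ring
    _ ≤ ‖(1 - g) * x‖ + ‖g‖ * ‖x * (1 - g)‖ :=
        (norm_add_le _ _).trans (add_le_add_right (norm_mul_le _ _) _)
    _ ≤ 2 * ‖x * (1 - g)‖ := by
        rw [hstar]; nlinarith [norm_nonneg (x * (1 - g))]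

section

variable {A : Type*} [CStarAlgebra A]

lemma herSet_smul_subset (r : ℝ) (b : A) : herSet (r • b) ⊆ herSet b := by
  refine closure_mono ?_
  rintro _ ⟨y, rfl⟩
  exact ⟨(r * r) • y, by simp only [smul_mul_assoc, mul_smul_comm, smul_smul]⟩

noncomputable def herSubmodule (b : A) : Submodule ℂ A :=
  (LinearMap.range (LinearMap.mulLeftRight ℂ (b, b))).topologicalClosure

lemma coe_herSubmodule (b : A) : (herSubmodule b : Set A) = herSet b := by
  simp only [herSubmodule, Submodule.topologicalClosure_coe, LinearMap.coe_range, herSet]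
  congr 1
  ext x
  simp [LinearMap.mulLeftRight_apply, eq_comm]

variable [PartialOrder A] [StarOrderedRing A]

lemma norm_mul_sq_le_of_le {x b : A} (hx : 0 ≤ x) (hxb : x ≤ b) (w : A) :
    ‖x * w‖ ^ 2 ≤ ‖x‖ * ‖star w * b * w‖ := by
  set s := CFC.sqrt x
  have hss : s * s = x := CFC.sqrt_mul_sqrt_self x
  have hs : ‖s‖ ^ 2 = ‖x‖ := by rw [CFC.norm_sqrt x, Real.sq_sqrt (norm_nonneg x)]
  have hsw : ‖s * w‖ ^ 2 ≤ ‖star w * b * w‖ := by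
    rw [sq, ← CStarRing.norm_star_mul_self, star_mul, (CFC.sqrt_nonneg x).star_eq,
      mul_assoc, ← mul_assoc s, hss, ← mul_assoc]
    exact CStarAlgebra.norm_le_norm_of_nonneg_of_le (star_left_conjugate_nonneg hx w)
      (star_left_conjugate_le_conjugate hxb w)
  calc ‖x * w‖ ^ 2 = ‖s * (s * w)‖ ^ 2 := by rw [← mul_assoc, hss]
    _ ≤ (‖s‖ * ‖s * w‖) ^ 2 := by gcongr; exact norm_mul_le _ _
    _ = ‖s‖ ^ 2 * ‖s * w‖ ^ 2 := mul_pow _ _ _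
    _ ≤ ‖x‖ * ‖star w * b * w‖ := by rw [hs]; gcongr

lemma exists_approxUnit_of_nonneg {b : A} (hb : 0 ≤ b) {δ : ℝ} (hδ : 0 < δ) :
    ∃ g : A, IsSelfAdjoint g ∧ ‖g‖ ≤ 1 ∧ ‖(1 - g) * b * (1 - g)‖ ≤ δ ∧
      ∀ x, g * x * g ∈ {z | ∃ y, z = b * y * b} := by
  have hsp := spectrum_nonneg_of_nonneg (𝕜 := ℝ) hb
  have hk : ContinuousOn (fun t : ℝ => (δ + t)⁻¹) (spectrum ℝ b) :=
    ContinuousOn.inv₀ (by fun_prop) fun t ht => by have := hsp ht; positivity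
  -- `k = (δ + b)⁻¹`
  set k := cfc (fun t : ℝ => (δ + t)⁻¹) b with hk_def
  set g := cfc (fun t : ℝ => t * (δ + t)⁻¹) b with hg_def
  have hg_cont : ContinuousOn (fun t : ℝ => t * (δ + t)⁻¹) (spectrum ℝ b) :=
    continuousOn_id.mul hk
  have hg : g = b * k := by
    rw [hg_def, cfc_mul (fun t : ℝ => t) _ b (by fun_prop) hk, cfc_id' ℝ b]
  have hkb : Commute k b := by
    simpa only [cfc_id' ℝ b] using cfc_commute_cfc (fun t : ℝ => (δ + t)⁻¹) (fun t => t) b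
  have hresolvent : 1 - g = δ • k := by
    rw [hk_def, hg_def, ← cfc_const_mul _ _ b hk, ← cfc_const_one ℝ b,
      ← cfc_sub (fun _ : ℝ => (1 : ℝ)) _ b (by fun_prop) hg_cont]
    exact cfc_congr fun t ht => by have := hsp ht; field_simp; ring
  have hg_norm : ‖g‖ ≤ 1 := norm_cfc_le zero_le_one fun t ht => by
    have := hsp ht
    rw [Real.norm_eq_abs, abs_of_nonneg (by positivity), mul_inv_le_iff₀ (by positivity)]
    linarith
  have hsub_norm : ‖1 - g‖ ≤ 1 := by
    rw [hresolvent, ← cfc_const_mul _ _ b hk]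
    refine norm_cfc_le zero_le_one fun t ht => ?_
    have := hsp ht
    rw [Real.norm_eq_abs, abs_of_nonneg (by positivity), mul_inv_le_iff₀ (by positivity)]
    linarith
  refine ⟨g, cfc_predicate _ b, hg_norm, ?_, fun x => ⟨k * x * k, ?_⟩⟩
  · have : (1 - g) * b * (1 - g) = δ • (g * (1 - g)) := by
      nth_rw 1 [hresolvent]; rw [smul_mul_assoc, smul_mul_assoc, hkb.eq, ← hg]
    rw [this, norm_smul, Real.norm_of_nonneg hδ.le]
    calc δ * ‖g * (1 - g)‖ ≤ δ * (‖g‖ * ‖1 - g‖) := by gcongr; exact norm_mul_le _ _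
      _ ≤ δ * (1 * 1) := by gcongr
      _ = δ := by ring
  · nth_rw 1 [hg]; rw [hg.trans hkb.eq.symm]; simp only [mul_assoc]

lemma mem_herSet_of_nonneg_of_le {x b : A} (hx : 0 ≤ x) (hxb : x ≤ b) : x ∈ herSet b := by
  refine Metric.mem_closure_iff.2 fun ε hε => ?_
  set δ := ε ^ 2 / (4 * ‖x‖ + 1)
  obtain ⟨g, hg_sa, hg_norm, hgb, hg_mem⟩ :=
    exists_approxUnit_of_nonneg (hx.trans hxb) (δ := δ) (by positivity)
  have hsq : ‖x * (1 - g)‖ ^ 2 ≤ ‖x‖ * δ := by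
    refine (norm_mul_sq_le_of_le hx hxb _).trans ?_
    rw [star_sub, star_one, hg_sa.star_eq]
    gcongr
  refine ⟨g * x * g, hg_mem x, ?_⟩
  rw [dist_eq_norm]
  refine (norm_sub_conj_le hx.isSelfAdjoint hg_sa hg_norm).trans_lt
    (lt_of_pow_lt_pow_left₀ 2 hε.le ?_)
  calc (2 * ‖x * (1 - g)‖) ^ 2 = 4 * ‖x * (1 - g)‖ ^ 2 := by ring
    _ ≤ 4 * ‖x‖ * δ := by linarith
    _ < ε ^ 2 := by
        rw [mul_div_assoc', div_lt_iff₀ (by positivity)]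
        nlinarith [pow_pos hε 2]

lemma mem_herSet_of_nonneg_of_le_smul {x b : A} (r : ℝ) (hx : 0 ≤ x) (hxb : x ≤ r • b) :
    x ∈ herSet b :=
  herSet_smul_subset r b (mem_herSet_of_nonneg_of_le hx hxb)

lemma exists_conj_le_smul {a y : A} (ha : 0 ≤ a) (hy : IsSelfAdjoint y) :
    ∃ r : ℝ, a * y * a ≤ r • a := by
  set s := CFC.sqrt a
  have hs : star s = s := (CFC.sqrt_nonneg a).star_eq
  have hss : s * s = a := CFC.sqrt_mul_sqrt_self a
  refine ⟨‖s * y * s‖, ?_⟩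
  have := CStarAlgebra.star_left_conjugate_le_norm_smul (a := s) (b := s * y * s)
    (hy.conjugate_self (.of_nonneg (CFC.sqrt_nonneg a)))
  rwa [hs, hss, show s * (s * y * s) * s = a * y * a by simp only [← hss, mul_assoc]] at this

theorem PositiveLinearMap.mapsTo_herSet {B : Type*} [CStarAlgebra B] [PartialOrder B]
    [StarOrderedRing B] (f : A →ₚ[ℂ] B) {a : A} (ha : 0 ≤ a) :
    Set.MapsTo f (herSet a) (herSet (f a)) := by
  have hnonneg : ∀ y, 0 ≤ y → f (a * y * a) ∈ herSet (f a) := fun y hy => by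
    obtain ⟨r, hr⟩ := exists_conj_le_smul ha hy.isSelfAdjoint
    refine mem_herSet_of_nonneg_of_le_smul r
      (f.map_nonneg (ha.isSelfAdjoint.conjugate_nonneg hy)) ?_
    rw [← f.map_smul_of_tower]
    exact OrderHomClass.mono f hr
  have hall : Submodule.span ℂ {y : A | 0 ≤ y} ≤
      (herSubmodule (f a)).comap (f.toLinearMap ∘ₗ LinearMap.mulLeftRight ℂ (a, a)) :=
    Submodule.span_le.2 fun y hy => by
      simpa [coe_herSubmodule, LinearMap.mulLeftRight_apply] using hnonneg y hy
  rw [CStarAlgebra.span_nonneg] at hall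
  refine Set.MapsTo.closure_left ?_ (map_continuous f) isClosed_closure
  rintro _ ⟨y, rfl⟩
  simpa [← coe_herSubmodule, LinearMap.mulLeftRight_apply] using hall (Submodule.mem_top (x := y))

end

theorem stmt1_general {A : Type*} [CStarAlgebra A] [PartialOrder A] [StarOrderedRing A]
    (Φ : A →ₗ[ℂ] A)
    (hpos : ∀ x : A, 0 ≤ x → 0 ≤ Φ x)
    (a : A) (ha : 0 ≤ a) :
    Φ '' (herSet a) ⊆ herSet (Φ a) :=
  ((PositiveLinearMap.mk₀ Φ hpos).mapsTo_herSet ha).image_subset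

/-- If `D` is a commutative C*-subalgebra of `A` and `Φ : A → D` is a
positive linear map, then `Φ(her(a)) ⊆ her(Φ(a))` for every positive `a ∈ A`. -/
theorem stmt1 {A : Type*} [CStarAlgebra A] [PartialOrder A] [StarOrderedRing A]
    (D : StarSubalgebra ℂ A)
    (hcomm : ∀ x ∈ D, ∀ y ∈ D, x * y = y * x)
    (Φ : A →ₗ[ℂ] A)
    (hrange : ∀ x : A, Φ x ∈ D)
    (hpos : ∀ x : A, 0 ≤ x → 0 ≤ Φ x)
    (a : A) (ha : 0 ≤ a) :
    Φ '' (herSet a) ⊆ herSet (Φ a) :=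
  stmt1_general Φ hpos a ha
end

section
/- Let A be a C*-algebra and let a, b be positive elements of A and x ∈ A. If xx* lies in the hereditary C*-subalgebra generated by a and x*x lies in the hereditary C*-subalgebra generated by b, then x lies in the closed subspace aAb (the closure of {a y b : y ∈ A}). -/
section Closure

variable {M : Type*} [Semigroup M] [TopologicalSpace M] [ContinuousMul M] {a b z : M}

lemma mul_mem_closure_setOf_left_mul (hz : z ∈ closure {w | ∃ y, w = a * y * b}) (c : M) :
    z * c ∈ closure {w | ∃ y, w = a * y} :=
  map_mem_closure (f := (· * c)) (continuous_mul_const c) hz fun _ ⟨y, hy⟩ ↦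
    ⟨y * b * c, by simp [hy, mul_assoc]⟩

lemma mul_mem_closure_setOf_right_mul (hz : z ∈ closure {w | ∃ y, w = a * y * b}) (c : M) :
    c * z ∈ closure {w | ∃ y, w = y * b} :=
  map_mem_closure (f := (c * ·)) (continuous_const_mul c) hz fun _ ⟨y, hy⟩ ↦
    ⟨c * a * y, by simp [hy, mul_assoc]⟩

lemma mul_mem_closure_setOf_mul_mul {p q : M} (hp : p ∈ closure {w | ∃ y, w = a * y})
    (hq : q ∈ closure {w | ∃ y, w = y * b}) : p * q ∈ closure {w | ∃ y, w = a * y * b} :=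
  map_mem_closure₂ continuous_mul hp hq fun _ ⟨y, hy⟩ _ ⟨y', hy'⟩ ↦
    ⟨y * y', by simp [hy, hy', mul_assoc]⟩

end Closure

lemma mul_one_sub_div_add_le {t ε : ℝ} (ht : 0 ≤ t) (hε : 0 < ε) :
    (1 - t / (t + ε)) * t * (1 - t / (t + ε)) ≤ ε := by
  have htε : 0 < t + ε := by positivity
  rw [one_sub_div htε.ne', add_sub_cancel_left, div_mul_eq_mul_div, div_mul_div_comm,
    div_le_iff₀ (by positivity)]
  nlinarith [mul_nonneg hε.le (add_nonneg (mul_nonneg ht ht) (mul_nonneg ht hε.le)), pow_pos hε 3]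

section ApproxUnit

variable {A : Type*} [CStarAlgebra A]

noncomputable def approxUnit (h : A) (ε : ℝ) : A := cfc (fun t : ℝ ↦ t / (t + ε)) h

lemma approxUnit_isSelfAdjoint (h : A) (ε : ℝ) : IsSelfAdjoint (approxUnit h ε) :=
  cfc_predicate _ h

variable [PartialOrder A] [StarOrderedRing A] {h : A} {ε : ℝ}

lemma add_ne_zero_of_mem_spectrum (hh : 0 ≤ h) (hε : 0 < ε) :
    ∀ t ∈ spectrum ℝ h, t + ε ≠ 0 :=
  fun _ ht ↦ (add_pos_of_nonneg_of_pos (spectrum_nonneg_of_nonneg hh ht) hε).ne'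

lemma approxUnit_eq_mul_cfc (hh : 0 ≤ h) (hε : 0 < ε) :
    approxUnit h ε = h * cfc (fun t : ℝ ↦ (t + ε)⁻¹) h := by
  have hne := add_ne_zero_of_mem_spectrum hh hε
  have hinv : ContinuousOn (fun t : ℝ ↦ (t + ε)⁻¹) (spectrum ℝ h) := by
    fun_prop (disch := assumption)
  conv_rhs => arg 1; rw [← cfc_id' ℝ h]
  rw [approxUnit, ← cfc_mul (fun t : ℝ ↦ t) _ h continuousOn_id hinv]
  rfl

lemma approxUnit_eq_cfc_mul (hh : 0 ≤ h) (hε : 0 < ε) :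
    approxUnit h ε = cfc (fun t : ℝ ↦ (t + ε)⁻¹) h * h := by
  have hcomm := cfc_commute_cfc (fun t : ℝ ↦ t) (fun t : ℝ ↦ (t + ε)⁻¹) h
  rw [cfc_id' ℝ h] at hcomm
  rw [approxUnit_eq_mul_cfc hh hε, hcomm.eq]

lemma norm_approxUnit_le_one (hh : 0 ≤ h) (hε : 0 < ε) : ‖approxUnit h ε‖ ≤ 1 :=
  norm_cfc_le zero_le_one fun t ht ↦ by
    have ht₀ := spectrum_nonneg_of_nonneg hh ht
    rw [Real.norm_of_nonneg (by positivity), div_le_one (by positivity)]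
    linarith

lemma norm_one_sub_approxUnit_mul_mul_le (hh : 0 ≤ h) (hε : 0 < ε) :
    ‖(1 - approxUnit h ε) * h * (1 - approxUnit h ε)‖ ≤ ε := by
  -- `hne` discharges the continuity side goals of the `cfc_*` rewrites
  have hne := add_ne_zero_of_mem_spectrum hh hε
  have hcfc : (1 - approxUnit h ε) * h * (1 - approxUnit h ε) =
      cfc (fun t : ℝ ↦ (1 - t / (t + ε)) * t * (1 - t / (t + ε))) h := by
    rw [approxUnit, cfc_mul .., cfc_mul .., cfc_sub .., cfc_const_one ℝ h, cfc_id' ℝ h]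
  rw [hcfc]
  refine norm_cfc_le hε.le fun t ht ↦ ?_
  have ht₀ := spectrum_nonneg_of_nonneg hh ht
  have htε : 0 < t + ε := by positivity
  rw [Real.norm_of_nonneg (mul_nonneg (mul_nonneg ?_ ht₀) ?_)]
  · exact mul_one_sub_div_add_le ht₀ hε
  all_goals rw [sub_nonneg, div_le_one htε]; linarith

lemma norm_sub_approxUnit_mul_le (x : A) (hε : 0 < ε) :
    ‖x - approxUnit (x * star x) ε * x‖ ≤ √ε := by
  set u := approxUnit (x * star x) ε
  have hstar : star (1 - u) = 1 - u := (IsSelfAdjoint.one A).sub (approxUnit_isSelfAdjoint _ ε)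
  refine Real.le_sqrt_of_sq_le ?_
  calc ‖x - u * x‖ ^ 2 = ‖(1 - u) * x * star ((1 - u) * x)‖ := by
        rw [CStarRing.norm_self_mul_star, sq, sub_mul, one_mul]
    _ = ‖(1 - u) * (x * star x) * (1 - u)‖ := by
        rw [star_mul, hstar, mul_assoc, mul_assoc, mul_assoc]
    _ ≤ ε := norm_one_sub_approxUnit_mul_mul_le (mul_star_self_nonneg x) hε

lemma norm_sub_mul_approxUnit_le (x : A) (hε : 0 < ε) :
    ‖x - x * approxUnit (star x * x) ε‖ ≤ √ε := by
  have := norm_sub_approxUnit_mul_le (star x) hε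
  rwa [star_star, ← norm_star, star_sub, star_mul, star_star,
    (approxUnit_isSelfAdjoint _ ε).star_eq] at this

lemma norm_sub_approxUnit_mul_mul_approxUnit_le (x : A) (hε : 0 < ε) :
    ‖x - approxUnit (x * star x) ε * x * approxUnit (star x * x) ε‖ ≤ 2 * √ε := by
  set u := approxUnit (x * star x) ε
  set v := approxUnit (star x * x) ε
  calc ‖x - u * x * v‖ = ‖(x - u * x) + u * (x - x * v)‖ := by noncomm_ring
    _ ≤ ‖x - u * x‖ + ‖u‖ * ‖x - x * v‖ := norm_add_le_of_le le_rfl (norm_mul_le _ _)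
    _ ≤ √ε + 1 * √ε := by
        gcongr
        · exact norm_sub_approxUnit_mul_le x hε
        · exact norm_approxUnit_le_one (mul_star_self_nonneg x) hε
        · exact norm_sub_mul_approxUnit_le x hε
    _ = 2 * √ε := by ring

lemma approxUnit_mul_mul_approxUnit_mem_closure {a b x : A} (hε : 0 < ε)
    (hx₁ : x * star x ∈ herSet a) (hx₂ : star x * x ∈ herSet b) :
    approxUnit (x * star x) ε * x * approxUnit (star x * x) ε ∈
      closure {z | ∃ y, z = a * y * b} := by
  refine mul_mem_closure_setOf_mul_mul ?_ ?_
  · rw [approxUnit_eq_mul_cfc (mul_star_self_nonneg x) hε, mul_assoc]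
    exact mul_mem_closure_setOf_left_mul hx₁ _
  · rw [approxUnit_eq_cfc_mul (star_mul_self_nonneg x) hε]
    exact mul_mem_closure_setOf_right_mul hx₂ _

end ApproxUnit

theorem stmt3_general {A : Type*} [CStarAlgebra A] [PartialOrder A] [StarOrderedRing A]
    (a b : A) (x : A)
    (hx1 : x * star x ∈ herSet a) (hx2 : star x * x ∈ herSet b) :
    x ∈ closure {z : A | ∃ y : A, z = a * y * b} := by
  rw [← closure_closure, Metric.mem_closure_iff]
  intro δ hδ
  have hε : 0 < (δ / 3) ^ 2 := by positivity
  refine ⟨_, approxUnit_mul_mul_approxUnit_mem_closure hε hx1 hx2, ?_⟩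
  calc dist x _ ≤ 2 * √((δ / 3) ^ 2) := by
        rw [dist_eq_norm]; exact norm_sub_approxUnit_mul_mul_approxUnit_le x hε
    _ < δ := by rw [Real.sqrt_sq (by positivity)]; linarith

/-- If `xx* ∈ her(a)` and `x*x ∈ her(b)` for positive `a, b`, then
`x` lies in the norm closure of `a A b`. -/
theorem stmt3 {A : Type*} [CStarAlgebra A] [PartialOrder A] [StarOrderedRing A]
    (a b : A) (ha : 0 ≤ a) (hb : 0 ≤ b) (x : A)
    (hx1 : x * star x ∈ herSet a) (hx2 : star x * x ∈ herSet b) :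
    x ∈ closure {z : A | ∃ y : A, z = a * y * b} :=
  stmt3_general a b x hx1 hx2
end

section
/- Let A be a C*-algebra and a ∈ A a positive element. Then a is invertible in the hereditary C*-subalgebra her(a) generated by a if and only if 0 is an isolated point of the set {0} ∪ spectrum(a). -/
lemma exists_isOpen_inter_union_eq_singleton_zero_iff {s : Set ℝ} :
    (∃ U : Set ℝ, IsOpen U ∧ U ∩ ({0} ∪ s) = {0}) ↔ ∃ ε > 0, ∀ t ∈ s, t = 0 ∨ ε ≤ |t| := by
  constructor
  · rintro ⟨U, hU, hUs⟩
    have h0U : (0 : ℝ) ∈ U := (hUs.symm ▸ rfl : (0 : ℝ) ∈ U ∩ ({0} ∪ s)).1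
    obtain ⟨ε, hε, hball⟩ := Metric.isOpen_iff.mp hU 0 h0U
    refine ⟨ε, hε, fun t ht => or_iff_not_imp_right.mpr fun htε => ?_⟩
    have htU : t ∈ U := hball (by simpa using not_le.mp htε)
    have ht0 : t ∈ U ∩ ({0} ∪ s) := ⟨htU, Or.inr ht⟩
    rwa [hUs] at ht0
  · rintro ⟨ε, hε, hgap⟩
    refine ⟨Metric.ball 0 ε, Metric.isOpen_ball, ?_⟩
    ext t
    simp only [Set.mem_inter_iff, Metric.mem_ball, dist_zero_right, Real.norm_eq_abs,
      Set.mem_union, Set.mem_singleton_iff]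
    constructor
    · rintro ⟨htε, rfl | ht⟩
      · rfl
      · exact (hgap t ht).resolve_right (not_le.mpr htε)
    · rintro rfl
      simpa using hε

section

variable {A : Type*} [CStarAlgebra A]

def IsUnitInHerSet (a : A) : Prop :=
  ∃ e ∈ herSet a, (∀ c ∈ herSet a, e * c = c ∧ c * e = c) ∧
    ∃ b ∈ herSet a, a * b = e ∧ b * a = e

lemma mul_mul_mem_herSet (a c : A) : a * c * a ∈ herSet a :=
  subset_closure ⟨c, rfl⟩

lemma mul_eq_self_of_mem_herSet {a e : A} (hea : e * a = a) (hae : a * e = a) {x : A}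
    (hx : x ∈ herSet a) : e * x = x ∧ x * e = x := by
  have hclosed : IsClosed {x : A | e * x = x ∧ x * e = x} :=
    (isClosed_eq (continuous_const_mul e) continuous_id).inter
      (isClosed_eq (continuous_mul_const e) continuous_id)
  refine closure_minimal ?_ hclosed hx
  rintro _ ⟨y, rfl⟩
  exact ⟨by rw [← mul_assoc, ← mul_assoc, hea], by rw [mul_assoc, hae]⟩

lemma isUnitInHerSet_of_commute_of_mul_mul_eq_self {a c : A} (hc : Commute a c)
    (hac : a * c * a = a) : IsUnitInHerSet a := by
  have hcaa : c * a * a = a := by rw [← hc.eq, hac]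
  have haac : a * a * c = a := by rw [mul_assoc, hc.eq, ← mul_assoc, hac]
  set e := a * (c * c) * a
  set b := a * (c * c * c) * a
  have hea : e * a = a := calc
    e * a = a * c * (c * a * a) := by simp only [e, mul_assoc]
    _ = a := by rw [hcaa, hac]
  have hae : a * e = a := calc
    a * e = a * a * c * c * a := by simp only [e, mul_assoc]
    _ = a := by rw [haac, hac]
  have hab : a * b = e := calc
    a * b = a * a * c * (c * c) * a := by simp only [b, mul_assoc]
    _ = e := by rw [haac]
  have hba : b * a = e := calc
    b * a = a * (c * c) * (c * a * a) := by simp only [b, mul_assoc]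
    _ = e := by rw [hcaa]
  exact ⟨e, mul_mul_mem_herSet a _, fun x hx => mul_eq_self_of_mem_herSet hea hae hx,
    b, mul_mul_mem_herSet a _, hab, hba⟩

lemma mul_cfc_mul_eq_cfc {a : A} (ha : IsSelfAdjoint a) {k : ℝ → ℝ}
    (hk : ContinuousOn k (spectrum ℝ a)) : a * cfc k a * a = cfc (fun t => t * k t * t) a := by
  rw [cfc_mul (fun t => t * k t) (fun t => t) a, cfc_mul (fun t => t) k a, cfc_id' ℝ a]

lemma commute_cfc_self {a : A} (ha : IsSelfAdjoint a) (k : ℝ → ℝ) : Commute a (cfc k a) := by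
  simpa only [cfc_id' ℝ a] using cfc_commute_cfc (fun t => t) k a

lemma exists_commute_mul_mul_eq_self_of_gap {a : A} (ha : IsSelfAdjoint a) {ε : ℝ} (hε : 0 < ε)
    (hgap : ∀ t ∈ spectrum ℝ a, t = 0 ∨ ε ≤ |t|) : ∃ c, Commute a c ∧ a * c * a = a := by
  set k : ℝ → ℝ := fun t => t / max (t ^ 2) (ε ^ 2)
  have hk : Continuous k :=
    continuous_id.div (by fun_prop) fun t => (lt_max_of_lt_right (by positivity)).ne'
  refine ⟨cfc k a, commute_cfc_self ha k, ?_⟩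
  calc a * cfc k a * a = cfc (fun t => t * k t * t) a := mul_cfc_mul_eq_cfc ha hk.continuousOn
    _ = cfc (fun t => t) a := cfc_congr fun t ht => ?_
    _ = a := cfc_id' ℝ a
  rcases hgap t ht with rfl | htε
  · simp
  · have ht2 : ε ^ 2 ≤ t ^ 2 := by simpa only [sq_abs] using pow_le_pow_left₀ hε.le htε 2
    have ht0 : t ≠ 0 := by rintro rfl; simp at htε; linarith
    simp only [k, max_eq_left ht2]
    field_simp

lemma one_le_two_mul_abs_mul_norm_of_mem_spectrum {a e b : A} (ha : IsSelfAdjoint a)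
    (he : ∀ x ∈ herSet a, x * e = x) (hab : a * b = e) {t : ℝ} (ht : t ∈ spectrum ℝ a)
    (ht0 : t ≠ 0) : 1 ≤ 2 * |t| * ‖b‖ := by
  set r := |t|
  have hr : 0 < r := abs_pos.mpr ht0
  set k : ℝ → ℝ := fun s => (r ^ 3 + |s| ^ 3)⁻¹
  have hden : ∀ s : ℝ, 0 < r ^ 3 + |s| ^ 3 := fun s => by positivity
  have hk : Continuous k := (continuous_const.add (by fun_prop)).inv₀ fun s => (hden s).ne'
  set x := a * cfc k a * a
  have hx : x = cfc (fun s => s * k s * s) a := mul_cfc_mul_eq_cfc ha hk.continuousOn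
  have hf : Continuous fun s => s * k s * s := (continuous_id.mul hk).mul continuous_id
  have hx_norm : 1 / (2 * r) ≤ ‖x‖ := calc
    1 / (2 * r) = ‖t * k t * t‖ := by
      have htt : t * t = r ^ 2 := by rw [← sq, sq_abs]
      rw [mul_right_comm, htt, Real.norm_of_nonneg (by positivity)]
      simp only [k]
      field_simp
      ring
    _ ≤ ‖x‖ := hx ▸ norm_apply_le_norm_cfc _ a ht hf.continuousOn
  have hxa_norm : ‖x * a‖ ≤ 1 := by
    rw [show x * a = cfc (fun s => s * k s * s * s) a by
      rw [cfc_mul _ (fun s => s) a hf.continuousOn, cfc_id' ℝ a, hx]]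
    refine norm_cfc_le zero_le_one fun s _ => ?_
    rw [show s * k s * s * s = s ^ 3 / (r ^ 3 + |s| ^ 3) by simp only [k]; ring,
      Real.norm_eq_abs, abs_div, abs_pow, abs_of_pos (hden s)]
    exact div_le_one_of_le₀ (by linarith [pow_pos hr 3]) (hden s).le
  have h : 1 / (2 * r) ≤ ‖b‖ := calc
    1 / (2 * r) ≤ ‖x‖ := hx_norm
    _ = ‖x * a * b‖ := by rw [mul_assoc, hab, he x (mul_mul_mem_herSet a _)]
    _ ≤ ‖x * a‖ * ‖b‖ := norm_mul_le _ _
    _ ≤ ‖b‖ := mul_le_of_le_one_left (norm_nonneg b) hxa_norm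
  rwa [div_le_iff₀ (by positivity), mul_comm] at h

lemma IsUnitInHerSet.exists_gap {a : A} (ha : IsSelfAdjoint a) (h : IsUnitInHerSet a) :
    ∃ ε > 0, ∀ t ∈ spectrum ℝ a, t = 0 ∨ ε ≤ |t| := by
  obtain ⟨e, -, he, b, -, hab, -⟩ := h
  refine ⟨1 / (2 * ‖b‖ + 1), by positivity, fun t ht => or_iff_not_imp_left.mpr fun ht0 => ?_⟩
  have := one_le_two_mul_abs_mul_norm_of_mem_spectrum ha (fun x hx => (he x hx).2) hab ht ht0
  rw [div_le_iff₀ (by positivity)]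
  nlinarith [abs_nonneg t]

theorem isUnitInHerSet_iff_exists_gap {a : A} (ha : IsSelfAdjoint a) :
    IsUnitInHerSet a ↔ ∃ ε > 0, ∀ t ∈ spectrum ℝ a, t = 0 ∨ ε ≤ |t| :=
  ⟨IsUnitInHerSet.exists_gap ha, fun ⟨_, hε, hgap⟩ =>
    let ⟨_, hc, hac⟩ := exists_commute_mul_mul_eq_self_of_gap ha hε hgap
    isUnitInHerSet_of_commute_of_mul_mul_eq_self hc hac⟩

end

/-- A positive element `a` is invertible in the hereditary subalgebra
`her(a)` it generates (i.e. `her(a)` has a unit `e` and there is `b ∈ her(a)` with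
`a * b = b * a = e`) if and only if `0` is an isolated point of `{0} ∪ spectrum(a)`. -/
theorem stmt4 {A : Type*} [CStarAlgebra A] [PartialOrder A] [StarOrderedRing A]
    (a : A) (ha : 0 ≤ a) :
    (∃ e ∈ herSet a, (∀ c ∈ herSet a, e * c = c ∧ c * e = c) ∧
      ∃ b ∈ herSet a, a * b = e ∧ b * a = e) ↔
    (∃ U : Set ℝ, IsOpen U ∧ U ∩ ({0} ∪ spectrum ℝ a) = {0}) :=
  (isUnitInHerSet_iff_exists_gap (IsSelfAdjoint.of_nonneg ha)).trans
    exists_isOpen_inter_union_eq_singleton_zero_iff.symm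
end

section
/- Let A be a unital C*-algebra with nonempty tracial state space T(A) and let p be a projection in A. Suppose that for every projection q ∈ A and every ε > 0 there exists a subprojection q' ≤ q in A with |τ(q') − (1/2)τ(q)| < ε for all τ ∈ T(A). Then for every λ ∈ [0,1] and every ε > 0 there exists a subprojection p' ≤ p with |τ(p') − λ·τ(p)| < ε for all τ ∈ T(A). -/
open scoped ComplexOrder

/-- The set of tracial states on a unital C*-algebra `A`. -/
def TracialStates (A : Type*) [CStarAlgebra A] : Set (A →ₗ[ℂ] ℂ) :=
  {τ | τ 1 = 1 ∧ (∀ a : A, 0 ≤ τ (star a * a)) ∧ ∀ a b : A, τ (a * b) = τ (b * a)}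

/-! The set of `c : ℝ` for which every projection `q` has subprojections of trace
approximately `c * τ q`, uniformly in `τ`, contains `1`, is closed under `c ↦ 1 - c` (pass to
`q - q'`) and under products (take a subprojection of a subprojection), and is closed in `ℝ`
because `‖τ q‖ ≤ 1`. Containing `1 / 2`, it contains every dyadic rational `k / 2 ^ n` in
`[0, 1]`, hence all of `[0, 1]`. -/

namespace TracialStates

variable {A : Type*} [CStarAlgebra A] {τ : A →ₗ[ℂ] ℂ}

lemma apply_nonneg_of_isStarProjection (hτ : τ ∈ TracialStates A) {r : A}
    (hr : IsStarProjection r) : 0 ≤ τ r := by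
  simpa [hr.isSelfAdjoint.star_eq, hr.isIdempotentElem.eq] using hτ.2.1 r

lemma norm_apply_le_one_of_isStarProjection [PartialOrder A] [StarOrderedRing A]
    (hτ : τ ∈ TracialStates A) {r : A} (hr : IsStarProjection r) : ‖τ r‖ ≤ 1 := by
  have h0 := apply_nonneg_of_isStarProjection hτ hr
  have h1 := apply_nonneg_of_isStarProjection hτ hr.one_sub
  rw [map_sub, hτ.1, sub_nonneg, ← Complex.norm_of_nonneg' h0] at h1
  exact_mod_cast h1

end TracialStates

def HasTraceFraction (A : Type*) [CStarAlgebra A] [PartialOrder A] (c : ℝ) : Prop :=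
  ∀ q : A, IsStarProjection q → ∀ ε : ℝ, 0 < ε →
    ∃ q' : A, IsStarProjection q' ∧ q' ≤ q ∧
      ∀ τ ∈ TracialStates A, ‖τ q' - (c : ℂ) * τ q‖ < ε

namespace HasTraceFraction

variable {A : Type*} [CStarAlgebra A] [PartialOrder A] {c d : ℝ}

lemma one : HasTraceFraction A 1 :=
  fun q hq _ hε ↦ ⟨q, hq, le_rfl, fun τ _ ↦ by simpa using hε⟩

lemma mul (hc : HasTraceFraction A c) (hd : HasTraceFraction A d) :
    HasTraceFraction A (c * d) := by
  intro q hq ε hε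
  set δ := ε / (|c| + 1) with hδ
  have hδpos : 0 < δ := by positivity
  obtain ⟨q₁, hq₁, hle₁, htr₁⟩ := hd q hq δ hδpos
  obtain ⟨q₂, hq₂, hle₂, htr₂⟩ := hc q₁ hq₁ δ hδpos
  refine ⟨q₂, hq₂, hle₂.trans hle₁, fun τ hτ ↦ ?_⟩
  calc ‖τ q₂ - ((c * d : ℝ) : ℂ) * τ q‖
      = ‖(τ q₂ - (c : ℂ) * τ q₁) + (c : ℂ) * (τ q₁ - (d : ℂ) * τ q)‖ := by
        push_cast; ring_nf
    _ ≤ ‖τ q₂ - (c : ℂ) * τ q₁‖ + |c| * ‖τ q₁ - (d : ℂ) * τ q‖ := by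
        grw [norm_add_le, norm_mul, Complex.norm_real, Real.norm_eq_abs]
    _ < δ + |c| * δ :=
        add_lt_add_of_lt_of_le (htr₂ τ hτ) (by gcongr; exact (htr₁ τ hτ).le)
    _ = ε := by rw [hδ]; field_simp; ring

variable [StarOrderedRing A]

lemma one_sub (hc : HasTraceFraction A c) : HasTraceFraction A (1 - c) := by
  intro q hq ε hε
  obtain ⟨q', hq', hle, htr⟩ := hc q hq ε hε
  refine ⟨q - q', (hq'.le_iff_sub hq).mp hle, sub_le_self q hq'.nonneg, fun τ hτ ↦ ?_⟩
  have hsplit : τ (q - q') - ((1 - c : ℝ) : ℂ) * τ q = -(τ q' - (c : ℂ) * τ q) := by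
    push_cast [map_sub]
    ring
  rw [hsplit, norm_neg]
  exact htr τ hτ

lemma zero : HasTraceFraction A 0 := by
  simpa using (one (A := A)).one_sub

end HasTraceFraction

lemma isClosed_setOf_hasTraceFraction (A : Type*) [CStarAlgebra A] [PartialOrder A]
    [StarOrderedRing A] : IsClosed {c : ℝ | HasTraceFraction A c} := by
  refine isClosed_of_closure_subset fun c hc q hq ε hε ↦ ?_
  obtain ⟨d, hd, hcd⟩ := Metric.mem_closure_iff.mp hc (ε / 2) (half_pos hε)
  obtain ⟨q', hq', hle, htr⟩ := hd q hq (ε / 2) (half_pos hε)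
  refine ⟨q', hq', hle, fun τ hτ ↦ ?_⟩
  have hnorm := TracialStates.norm_apply_le_one_of_isStarProjection hτ hq
  calc ‖τ q' - (c : ℂ) * τ q‖
      = ‖(τ q' - (d : ℂ) * τ q) + ((d - c : ℝ) : ℂ) * τ q‖ := by push_cast; ring_nf
    _ ≤ ‖τ q' - (d : ℂ) * τ q‖ + dist c d * ‖τ q‖ := by
        grw [norm_add_le, norm_mul, Complex.norm_real, Real.dist_eq, Real.norm_eq_abs, abs_sub_comm]
    _ < ε / 2 + ε / 2 * 1 :=
        add_lt_add_of_lt_of_le (htr τ hτ)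
          (mul_le_mul hcd.le hnorm (norm_nonneg _) (half_pos hε).le)
    _ = ε := by ring

lemma hasTraceFraction_natCast_div_two_pow {A : Type*} [CStarAlgebra A] [PartialOrder A]
    [StarOrderedRing A] (hhalf : HasTraceFraction A (1 / 2)) :
    ∀ n k : ℕ, k ≤ 2 ^ n → HasTraceFraction A (k / 2 ^ n) := by
  intro n
  induction n with
  | zero =>
    intro k hk
    interval_cases k
    · simpa using HasTraceFraction.zero
    · simpa using HasTraceFraction.one
  | succ n ih =>
    intro k hk
    rcases le_or_gt k (2 ^ n) with hkn | hkn
    · convert hhalf.mul (ih k hkn) using 1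
      field_simp; ring
    · have hj : 2 ^ (n + 1) - k ≤ 2 ^ n := by omega
      convert (hhalf.mul (ih _ hj)).one_sub using 1
      rw [Nat.cast_sub hk]
      push_cast
      field_simp; ring

lemma Icc_subset_closure_natCast_div_two_pow :
    Set.Icc (0 : ℝ) 1 ⊆ closure {x : ℝ | ∃ n k : ℕ, k ≤ 2 ^ n ∧ x = k / 2 ^ n} := by
  intro x ⟨hx0, hx1⟩
  refine Metric.mem_closure_iff.mpr fun ε hε ↦ ?_
  obtain ⟨n, hn⟩ : ∃ n : ℕ, (1 / 2 : ℝ) ^ n < ε :=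
    exists_pow_lt_of_lt_one hε (by norm_num)
  have h2n : (0 : ℝ) < 2 ^ n := by positivity
  set k := ⌊x * 2 ^ n⌋₊
  have hk_le : (k : ℝ) ≤ x * 2 ^ n := Nat.floor_le (by positivity)
  have hk_gt : x * 2 ^ n - 1 < k := Nat.sub_one_lt_floor _
  refine ⟨k / 2 ^ n, ⟨n, k, Nat.floor_le_of_le ?_, rfl⟩, ?_⟩
  · push_cast
    nlinarith
  · have h0 : 0 ≤ x - k / 2 ^ n := by rw [sub_nonneg, div_le_iff₀ h2n]; exact hk_le
    have h1 : x - k / 2 ^ n < 1 / 2 ^ n := by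
      rw [sub_lt_iff_lt_add, ← add_div, lt_div_iff₀ h2n]; linarith
    rw [Real.dist_eq, abs_of_nonneg h0]
    exact h1.trans (by rwa [one_div_pow] at hn)

theorem stmt6_general {A : Type*} [CStarAlgebra A] [PartialOrder A] [StarOrderedRing A]
    (hhalf : ∀ q : A, IsSelfAdjoint q → q * q = q → ∀ ε : ℝ, 0 < ε →
      ∃ q' : A, IsSelfAdjoint q' ∧ q' * q' = q' ∧ q' ≤ q ∧
        ∀ τ ∈ TracialStates A, ‖τ q' - (1 / 2 : ℂ) * τ q‖ < ε)
    (p : A) (hp : IsSelfAdjoint p) (hp2 : p * p = p)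
    (lam : ℝ) (hlam : lam ∈ Set.Icc (0 : ℝ) 1) (ε : ℝ) (hε : 0 < ε) :
    ∃ p' : A, IsSelfAdjoint p' ∧ p' * p' = p' ∧ p' ≤ p ∧
      ∀ τ ∈ TracialStates A, ‖τ p' - (lam : ℂ) * τ p‖ < ε := by
  have hhalf' : HasTraceFraction A (1 / 2) := fun q hq ε hε ↦ by
    obtain ⟨q', hsa, hidem, hle, htr⟩ := hhalf q hq.isSelfAdjoint hq.isIdempotentElem ε hε
    exact ⟨q', ⟨hidem, hsa⟩, hle, by simpa using htr⟩
  have hdyadic :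
      {x : ℝ | ∃ n k : ℕ, k ≤ 2 ^ n ∧ x = k / 2 ^ n} ⊆ {c | HasTraceFraction A c} := by
    rintro _ ⟨n, k, hk, rfl⟩
    exact hasTraceFraction_natCast_div_two_pow hhalf' n k hk
  have hlam' : HasTraceFraction A lam :=
    closure_minimal hdyadic (isClosed_setOf_hasTraceFraction A)
      (Icc_subset_closure_natCast_div_two_pow hlam)
  obtain ⟨p', hp', hle, htr⟩ := hlam' p ⟨hp2, hp⟩ ε hε
  exact ⟨p', hp'.isSelfAdjoint, hp'.isIdempotentElem, hle, htr⟩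

/-- If every projection in `A` can be uniformly approximately halved in
trace by a subprojection, then for every projection `p`, every `λ ∈ [0,1]` and `ε > 0`
there is a subprojection `p' ≤ p` with `|τ(p') − λ τ(p)| < ε` for all tracial states. -/
theorem stmt6 {A : Type*} [CStarAlgebra A] [PartialOrder A] [StarOrderedRing A]
    (hT : (TracialStates A).Nonempty)
    (hhalf : ∀ q : A, IsSelfAdjoint q → q * q = q → ∀ ε : ℝ, 0 < ε →
      ∃ q' : A, IsSelfAdjoint q' ∧ q' * q' = q' ∧ q' ≤ q ∧
        ∀ τ ∈ TracialStates A, ‖τ q' - (1 / 2 : ℂ) * τ q‖ < ε)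
    (p : A) (hp : IsSelfAdjoint p) (hp2 : p * p = p)
    (lam : ℝ) (hlam : lam ∈ Set.Icc (0 : ℝ) 1) (ε : ℝ) (hε : 0 < ε) :
    ∃ p' : A, IsSelfAdjoint p' ∧ p' * p' = p' ∧ p' ≤ p ∧
      ∀ τ ∈ TracialStates A, ‖τ p' - (lam : ℂ) * τ p‖ < ε :=
  stmt6_general hhalf p hp hp2 lam hlam ε hε
end

section
/- Let A be a unital C*-algebra with nonempty tracial state space T(A). Suppose that for every projection p ∈ A, every λ ∈ [0,1], and every ε > 0 there exists a subprojection p' ≤ p with |τ(p') − λτ(p)| < ε for all τ ∈ T(A). Then for every projection p ∈ A, every n ≥ 1 and every ε > 0 there exist pairwise orthogonal projections p_1, …, p_n ∈ A with p_1 + ⋯ + p_n = p and |τ(p_j) − (1/n)τ(p)| < ε for all τ ∈ T(A) and all j. -/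
/-!
Induction on the number of pieces: cut from `p` a subprojection `q` with `τ q ≈ τ p / (n + 2)`,
and split the projection `p - q` into `n + 1` pieces with `τ ≈ τ (p - q) / (n + 1)`. Since
`τ (p - q) / (n + 1) - τ p / (n + 2) = -(τ q - τ p / (n + 2)) / (n + 1)`, the error of the first
cut is not amplified, so halving the tolerance at each step suffices. Pieces below `p - q` are
orthogonal to `q` because `q (p - q) = 0`.
-/

open scoped ComplexOrder

lemma Fin.pairwise_mul_cons_eq_zero {R : Type*} [MulZeroClass R] {n : ℕ} {q : R}
    {P : Fin n → R} (hqP : ∀ j, q * P j = 0) (hPq : ∀ j, P j * q = 0)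
    (hP : Pairwise fun i j => P i * P j = 0) :
    Pairwise fun i j =>
      (Fin.cons q P : Fin (n + 1) → R) i * (Fin.cons q P : Fin (n + 1) → R) j = 0 := by
  intro i j hij
  cases i using Fin.cases <;> cases j using Fin.cases
  · exact absurd rfl hij
  · simpa using hqP _
  · simpa using hPq _
  · simpa using hP (fun h => hij (congrArg Fin.succ h))

lemma Complex.norm_sub_div_lt_of_add_eq {m : ℕ} {a b t x : ℂ} {δ : ℝ} (hab : a + b = t)
    (ha : ‖a - t / (m + 2)‖ < δ) (hx : ‖x - b / (m + 1)‖ < δ) :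
    ‖x - t / (m + 2)‖ < 2 * δ := by
  have hm1 : (m + 1 : ℂ) ≠ 0 := by exact_mod_cast m.succ_ne_zero
  have hm2 : (m + 2 : ℂ) ≠ 0 := by exact_mod_cast (m + 1).succ_ne_zero
  have hsplit : x - t / (m + 2) = (x - b / (m + 1)) - (a - t / (m + 2)) / (m + 1) := by
    rw [← hab]; field_simp; ring
  have hδ : ‖(a - t / (m + 2)) / (m + 1)‖ ≤ ‖a - t / (m + 2)‖ := by
    rw [norm_div]
    apply div_le_self (norm_nonneg _)
    have hnorm : ‖(m + 1 : ℂ)‖ = m + 1 := by exact_mod_cast Complex.norm_natCast (m + 1)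
    rw [hnorm]
    linarith [m.cast_nonneg (α := ℝ)]
  calc ‖x - t / (m + 2)‖ ≤ ‖x - b / (m + 1)‖ + ‖(a - t / (m + 2)) / (m + 1)‖ := by
        rw [hsplit]; exact norm_sub_le _ _
    _ < δ + δ := by linarith
    _ = 2 * δ := by ring

namespace IsStarProjection

variable {A : Type*} [NonUnitalCStarAlgebra A] [PartialOrder A] [StarOrderedRing A]

lemma mul_eq_zero_of_le_of_mul_eq_zero {e f g : A} (he : IsStarProjection e)
    (hf : IsStarProjection f) (hef : e ≤ f) (hgf : g * f = 0) : g * e = 0 := by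
  rw [← (he.le_iff_mul_eq_right hf).mp hef, ← mul_assoc, hgf, zero_mul]

lemma mul_eq_zero_of_le_of_mul_eq_zero' {e f g : A} (he : IsStarProjection e)
    (hf : IsStarProjection f) (hef : e ≤ f) (hfg : f * g = 0) : e * g = 0 := by
  rw [← (he.le_iff_mul_eq_left hf).mp hef, mul_assoc, hfg, mul_zero]

theorem exists_equipartition {S : Set (A →ₗ[ℂ] ℂ)} {p : A} (hp : IsStarProjection p)
    (hdiv : ∀ q : A, IsStarProjection q → ∀ m : ℕ, ∀ δ : ℝ, 0 < δ →
      ∃ q', IsStarProjection q' ∧ q' ≤ q ∧ ∀ τ ∈ S, ‖τ q' - τ q / (m + 2)‖ < δ)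
    (n : ℕ) {ε : ℝ} (hε : 0 < ε) :
    ∃ P : Fin (n + 1) → A, (∀ j, IsStarProjection (P j)) ∧
      Pairwise (fun i j => P i * P j = 0) ∧ ∑ j, P j = p ∧
      ∀ j, ∀ τ ∈ S, ‖τ (P j) - τ p / (n + 1)‖ < ε := by
  induction n generalizing p ε with
  | zero =>
    refine ⟨fun _ => p, fun _ => hp, fun i j hij => (hij (Fin.ext (by omega))).elim, ?_, ?_⟩
    · simp
    · intro j τ _
      simpa using hε
  | succ m ih =>
    obtain ⟨q, hq, hqp, hqτ⟩ := hdiv p hp m (ε / 2) (half_pos hε)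
    have hr : IsStarProjection (p - q) := (hq.le_iff_sub hp).mp hqp
    obtain ⟨P, hP, hPP, hPr, hPτ⟩ := ih hr (half_pos hε)
    have hPle : ∀ j, P j ≤ p - q := fun j =>
      hPr ▸ Finset.single_le_sum (fun i _ => (hP i).nonneg) (Finset.mem_univ j)
    have hqr : q * (p - q) = 0 := by
      rw [mul_sub, (hq.le_iff_mul_eq_left hp).mp hqp, hq.isIdempotentElem.eq, sub_self]
    have hrq : (p - q) * q = 0 := by
      rw [sub_mul, (hq.le_iff_mul_eq_right hp).mp hqp, hq.isIdempotentElem.eq, sub_self]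
    refine ⟨Fin.cons q P, fun j => Fin.cases hq hP j,
      Fin.pairwise_mul_cons_eq_zero
        (fun j => (hP j).mul_eq_zero_of_le_of_mul_eq_zero hr (hPle j) hqr)
        (fun j => (hP j).mul_eq_zero_of_le_of_mul_eq_zero' hr (hPle j) hrq) hPP, ?_, ?_⟩
    · rw [Fin.sum_cons, hPr, add_sub_cancel]
    · intro j τ hτ
      have hsplit : τ q + τ (p - q) = τ p := by rw [← map_add, add_sub_cancel]
      have hqτ' := hqτ τ hτ
      have hm : ((m + 1 : ℕ) : ℂ) + 1 = m + 2 := by push_cast; ring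
      rw [hm]
      cases j using Fin.cases with
      | zero => simpa using hqτ'.trans (half_lt_self hε)
      | succ j =>
        simpa [mul_div_cancel₀] using
          Complex.norm_sub_div_lt_of_add_eq hsplit hqτ' (hPτ j τ hτ)

end IsStarProjection

theorem stmt7_general {A : Type*} [CStarAlgebra A] [PartialOrder A] [StarOrderedRing A]
    (hdiv : ∀ q : A, IsSelfAdjoint q → q * q = q → ∀ lam ∈ Set.Icc (0 : ℝ) 1,
      ∀ ε : ℝ, 0 < ε →
      ∃ q' : A, IsSelfAdjoint q' ∧ q' * q' = q' ∧ q' ≤ q ∧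
        ∀ τ ∈ TracialStates A, ‖τ q' - (lam : ℂ) * τ q‖ < ε)
    (p : A) (hp : IsSelfAdjoint p) (hp2 : p * p = p)
    (n : ℕ) (hn : 1 ≤ n) (ε : ℝ) (hε : 0 < ε) :
    ∃ P : Fin n → A,
      (∀ j, IsSelfAdjoint (P j) ∧ P j * P j = P j) ∧
      (∀ i j, i ≠ j → P i * P j = 0) ∧
      (∑ j, P j = p) ∧
      ∀ j, ∀ τ ∈ TracialStates A, ‖τ (P j) - (1 / (n : ℂ)) * τ p‖ < ε := by
  have hcut : ∀ q : A, IsStarProjection q → ∀ m : ℕ, ∀ δ : ℝ, 0 < δ →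
      ∃ q', IsStarProjection q' ∧ q' ≤ q ∧
        ∀ τ ∈ TracialStates A, ‖τ q' - τ q / (m + 2)‖ < δ := by
    intro q hq m δ hδ
    have hlam : 1 / ((m : ℝ) + 2) ∈ Set.Icc (0 : ℝ) 1 :=
      ⟨by positivity,
        (div_le_one (by positivity)).mpr (by linarith [m.cast_nonneg (α := ℝ)])⟩
    obtain ⟨q', hq'sa, hq'idem, hq'q, hq'τ⟩ :=
      hdiv q hq.isSelfAdjoint hq.isIdempotentElem _ hlam δ hδ
    refine ⟨q', ⟨hq'idem, hq'sa⟩, hq'q, fun τ hτ => ?_⟩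
    simpa [div_eq_inv_mul] using hq'τ τ hτ
  obtain ⟨k, rfl⟩ := Nat.exists_eq_add_of_le' hn
  obtain ⟨P, hP, hPP, hPp, hPτ⟩ :=
    IsStarProjection.exists_equipartition ⟨hp2, hp⟩ hcut k hε
  refine ⟨P, fun j => ⟨(hP j).isSelfAdjoint, (hP j).isIdempotentElem⟩, hPP, hPp, ?_⟩
  simpa [div_eq_inv_mul] using hPτ

/-- If every projection admits subprojections of any prescribed tracial
proportion `λ ∈ [0,1]` (up to `ε`, uniformly over traces), then every projection `p`
can be partitioned into `n` pairwise orthogonal projections, each of trace uniformly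
approximately `(1/n) τ(p)`. -/
theorem stmt7 {A : Type*} [CStarAlgebra A] [PartialOrder A] [StarOrderedRing A]
    (hT : (TracialStates A).Nonempty)
    (hdiv : ∀ q : A, IsSelfAdjoint q → q * q = q → ∀ lam ∈ Set.Icc (0 : ℝ) 1,
      ∀ ε : ℝ, 0 < ε →
      ∃ q' : A, IsSelfAdjoint q' ∧ q' * q' = q' ∧ q' ≤ q ∧
        ∀ τ ∈ TracialStates A, ‖τ q' - (lam : ℂ) * τ q‖ < ε)
    (p : A) (hp : IsSelfAdjoint p) (hp2 : p * p = p)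
    (n : ℕ) (hn : 1 ≤ n) (ε : ℝ) (hε : 0 < ε) :
    ∃ P : Fin n → A,
      (∀ j, IsSelfAdjoint (P j) ∧ P j * P j = P j) ∧
      (∀ i j, i ≠ j → P i * P j = 0) ∧
      (∑ j, P j = p) ∧
      ∀ j, ∀ τ ∈ TracialStates A, ‖τ (P j) - (1 / (n : ℂ)) * τ p‖ < ε :=
  stmt7_general hdiv p hp hp2 n hn ε hε
end

section
/- Let K be a Choquet simplex, f : K → ℝ an upper semicontinuous affine function, and g : K → ℝ a lower semicontinuous affine function with f(κ) < g(κ) for all κ ∈ K. Then there exists a continuous affine function h : K → ℝ with f(κ) < h(κ) < g(κ) for all κ ∈ K. -/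
/-!
It suffices that `f` is concave and `g` convex: then the set of pairs `(x - y, t)` with
`x, y ∈ K` and `t ≤ f x - g y` is convex. Semicontinuity and compactness keep `(0, 0)` out of its
closure, and a Hahn–Banach functional separating them, normalised to have coefficient `1` on the
`ℝ`-coordinate, yields `f x - φ x + ε ≤ g y - φ y` on `K × K` for a continuous linear `φ` and
some `ε > 0`. A constant `a` squeezed between the two sides gives the continuous affine `a + φ`.
-/

variable {E : Type*} [AddCommGroup E] [Module ℝ E] [TopologicalSpace E]
  [IsTopologicalAddGroup E] [ContinuousSMul ℝ E]

/-- The cone in `E × ℝ` with base `K` at height `1`. `K` is a Choquet simplex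
precisely when this cone induces a lattice order. -/
def simplexCone (K : Set E) : Set (E × ℝ) :=
  {c | ∃ r : ℝ, 0 ≤ r ∧ ∃ x ∈ K, c = (r • x, r)}

/-- `K` is a Choquet simplex: the ordering on `E × ℝ` induced by the cone with base
`K` is a lattice ordering (any two elements have a least upper bound). -/
def IsChoquetSimplex (K : Set E) : Prop :=
  ∀ a b : E × ℝ, ∃ m : E × ℝ,
    m - a ∈ simplexCone K ∧ m - b ∈ simplexCone K ∧
    ∀ c : E × ℝ, c - a ∈ simplexCone K → c - b ∈ simplexCone K →
      c - m ∈ simplexCone K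

def AffineOn (K : Set E) (f : E → ℝ) : Prop :=
  ∀ x ∈ K, ∀ y ∈ K, ∀ t : ℝ, t ∈ Set.Icc (0 : ℝ) 1 →
    f (t • x + (1 - t) • y) = t * f x + (1 - t) * f y

theorem AffineOn.concaveOn {V : Type*} [AddCommGroup V] [Module ℝ V] {K : Set V}
    {f : V → ℝ} (hK : Convex ℝ K) (hf : AffineOn K f) :
    ConcaveOn ℝ K f :=
  ⟨hK, fun x hx y hy a b ha hb hab => by
    obtain rfl : b = 1 - a := by linarith
    exact (hf x hx y hy a ⟨ha, by linarith⟩).ge⟩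

theorem AffineOn.convexOn {V : Type*} [AddCommGroup V] [Module ℝ V] {K : Set V}
    {f : V → ℝ} (hK : Convex ℝ K) (hf : AffineOn K f) :
    ConvexOn ℝ K f :=
  ⟨hK, fun x hx y hy a b ha hb hab => by
    obtain rfl : b = 1 - a := by linarith
    exact (hf x hx y hy a ⟨ha, by linarith⟩).le⟩

theorem LinearMap.affineOn_const_add {V : Type*} [AddCommGroup V] [Module ℝ V] (φ : V →ₗ[ℝ] ℝ)
    (K : Set V) (a : ℝ) :
    AffineOn K fun x => a + φ x := by
  intro x _ y _ t _
  simp only [map_add, map_smul, smul_eq_mul]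
  ring

open Topology Filter

def subHypograph {V : Type*} [Sub V] (K : Set V) (f g : V → ℝ) : Set (V × ℝ) :=
  {p | ∃ x ∈ K, ∃ y ∈ K, p.1 = x - y ∧ p.2 ≤ f x - g y}

theorem convex_subHypograph {V : Type*} [AddCommGroup V] [Module ℝ V] {K : Set V} {f g : V → ℝ}
    (hf : ConcaveOn ℝ K f) (hg : ConvexOn ℝ K g) : Convex ℝ (subHypograph K f g) := by
  rintro p ⟨x₁, hx₁, y₁, hy₁, hp₁, hp₂⟩ q ⟨x₂, hx₂, y₂, hy₂, hq₁, hq₂⟩ a b ha hb hab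
  refine ⟨a • x₁ + b • x₂, hf.1 hx₁ hx₂ ha hb hab, a • y₁ + b • y₂, hg.1 hy₁ hy₂ ha hb hab, ?_, ?_⟩
  · simp only [Prod.fst_add, Prod.smul_fst, hp₁, hq₁]
    module
  · have hfx := hf.2 hx₁ hx₂ ha hb hab
    have hgy := hg.2 hy₁ hy₂ ha hb hab
    simp only [Prod.snd_add, Prod.smul_snd, smul_eq_mul] at hfx hgy ⊢
    nlinarith [mul_le_mul_of_nonneg_left hp₂ ha, mul_le_mul_of_nonneg_left hq₂ hb]

theorem zero_notMem_closure_subHypograph {G : Type*} [AddCommGroup G] [TopologicalSpace G]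
    [ContinuousSub G] {K : Set G} (hK : IsCompact K) {f g : G → ℝ}
    (hf : UpperSemicontinuousOn f K) (hg : LowerSemicontinuousOn g K)
    (hfg : ∀ x ∈ K, f x < g x) : ((0 : G), (0 : ℝ)) ∉ closure (subHypograph K f g) := by
  have hev : ∀ᶠ p : G × ℝ in 𝓝 (0, 0), ∀ x ∈ K, x - p.1 ∈ K → f x - g (x - p.1) < p.2 := by
    refine (hK.eventually_forall_of_forall_eventually
      (P := fun p x => x ∈ K → x - p.1 ∈ K → f x - g (x - p.1) < p.2) fun a ha => ?_).mono
      fun p hp x hx => hp x hx hx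
    obtain ⟨δ, hδ, hδa⟩ : ∃ δ, 0 < δ ∧ f a + 3 * δ = g a :=
      ⟨(g a - f a) / 3, by linarith [hfg a ha], by ring⟩
    have hf' : ∀ᶠ x in 𝓝 a, x ∈ K → f x < f a + δ :=
      eventually_nhdsWithin_iff.1 (hf a ha _ (by linarith))
    have hg' : ∀ᶠ y in 𝓝 a, y ∈ K → g a - δ < g y :=
      eventually_nhdsWithin_iff.1 (hg a ha _ (by linarith))
    have hx : Tendsto (fun z : (G × ℝ) × G => z.2) (𝓝 ((0, 0), a)) (𝓝 a) :=
      continuous_snd.tendsto _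
    have hy : Tendsto (fun z : (G × ℝ) × G => z.2 - z.1.1) (𝓝 ((0, 0), a)) (𝓝 a) :=
      (by fun_prop : Continuous fun z : (G × ℝ) × G => z.2 - z.1.1).tendsto' _ _ (by simp)
    have ht : ∀ᶠ z : (G × ℝ) × G in 𝓝 ((0, 0), a), -δ < z.1.2 :=
      (continuous_snd.comp continuous_fst).tendsto ((0, 0), a) (Ioi_mem_nhds (by simpa using hδ))
    filter_upwards [hx.eventually hf', hy.eventually hg', ht] with z hzx hzy hzt hzK hzK'
    linarith [hzx hzK, hzy hzK']
  rw [mem_closure_iff_frequently, not_frequently]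
  filter_upwards [hev] with p hp ⟨x, hx, y, hy, hp₁, hp₂⟩
  have hxy : x - p.1 = y := by rw [hp₁, sub_sub_cancel]
  linarith [hp x hx (hxy ▸ hy), hxy ▸ hp₂]

theorem exists_forall_lt_and_lt_of_add_le {ι : Type*} {s : Set ι} {F G : ι → ℝ} {ε : ℝ}
    (hε : 0 < ε) (h : ∀ x ∈ s, ∀ y ∈ s, F x + ε ≤ G y) : ∃ a : ℝ, ∀ x ∈ s, F x < a ∧ a < G x := by
  rcases s.eq_empty_or_nonempty with rfl | ⟨y₀, hy₀⟩
  · exact ⟨0, by simp⟩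
  have hbdd : BddAbove (F '' s) := ⟨G y₀ - ε, by
    rintro _ ⟨x, hx, rfl⟩
    linarith [h x hx y₀ hy₀]⟩
  refine ⟨sSup (F '' s) + ε / 2, fun x hx => ⟨?_, ?_⟩⟩
  · linarith [le_csSup hbdd ⟨x, hx, rfl⟩]
  · have : sSup (F '' s) ≤ G x - ε := csSup_le ⟨F y₀, y₀, hy₀, rfl⟩ (by
      rintro _ ⟨y, hy, rfl⟩
      linarith [h y hy x hx])
    linarith

theorem exists_clm_forall_sub_add_le_sub [LocallyConvexSpace ℝ E] {K : Set E} (hK : IsCompact K)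
    {f g : E → ℝ} (hf : UpperSemicontinuousOn f K) (hf' : ConcaveOn ℝ K f)
    (hg : LowerSemicontinuousOn g K) (hg' : ConvexOn ℝ K g) (hfg : ∀ x ∈ K, f x < g x) :
    ∃ φ : E →L[ℝ] ℝ, ∃ ε > 0, ∀ x ∈ K, ∀ y ∈ K, f x - φ x + ε ≤ g y - φ y := by
  rcases K.eq_empty_or_nonempty with rfl | ⟨x₀, hx₀⟩
  · exact ⟨0, 1, one_pos, by simp⟩
  obtain ⟨L, c, hLc, hc⟩ := geometric_hahn_banach_closed_point
    (convex_subHypograph hf' hg').closure isClosed_closure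
    (zero_notMem_closure_subHypograph hK hf hg hfg)
  rw [Prod.mk_zero_zero, map_zero] at hc
  set α := L (0, 1)
  have hL : ∀ x y t, L (x - y, t) = L (x, 0) - L (y, 0) + t * α := by
    intro x y t
    rw [← smul_eq_mul, ← map_smul, ← map_sub, ← map_add]
    simp
  have hLK : ∀ x ∈ K, ∀ y ∈ K, L (x, 0) - L (y, 0) + (f x - g y) * α < c :=
    fun x hx y hy => hL x y _ ▸ hLc _ (subset_closure ⟨x, hx, y, hy, rfl, le_rfl⟩)
  -- test at `(x₀ - x₀, f x₀ - g x₀)`, whose second coordinate is negative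
  have hα : 0 < α := by
    by_contra! hα
    nlinarith [hLK x₀ hx₀ x₀ hx₀, hfg x₀ hx₀]
  refine ⟨-α⁻¹ • L.comp (.inl ℝ E ℝ), -c / α, div_pos (neg_pos.2 hc) hα, fun x hx y hy => ?_⟩
  simp only [smul_apply, ContinuousLinearMap.comp_apply,
    ContinuousLinearMap.inl_apply, smul_eq_mul]
  calc f x - -α⁻¹ * L (x, 0) + -c / α = (α * f x + L (x, 0) - c) / α := by field_simp; ring
    _ ≤ (α * g y + L (y, 0)) / α := by gcongr; linarith [hLK x hx y hy]
    _ = g y - -α⁻¹ * L (y, 0) := by field_simp; ring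

theorem exists_clm_add_const_between [LocallyConvexSpace ℝ E] {K : Set E} (hK : IsCompact K)
    {f g : E → ℝ} (hf : UpperSemicontinuousOn f K) (hf' : ConcaveOn ℝ K f)
    (hg : LowerSemicontinuousOn g K) (hg' : ConvexOn ℝ K g) (hfg : ∀ x ∈ K, f x < g x) :
    ∃ (φ : E →L[ℝ] ℝ) (a : ℝ), ∀ x ∈ K, f x < a + φ x ∧ a + φ x < g x := by
  obtain ⟨φ, ε, hε, hsep⟩ := exists_clm_forall_sub_add_le_sub hK hf hf' hg hg' hfg
  obtain ⟨a, ha⟩ := exists_forall_lt_and_lt_of_add_le hε hsep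
  exact ⟨φ, a, fun x hx => ⟨by linarith [ha x hx], by linarith [ha x hx]⟩⟩

theorem stmt11_general [LocallyConvexSpace ℝ E]
    (K : Set E) (hKcp : IsCompact K) (hKcv : Convex ℝ K)
    (f g : E → ℝ)
    (hf_usc : UpperSemicontinuousOn f K) (hf_aff : AffineOn K f)
    (hg_lsc : LowerSemicontinuousOn g K) (hg_aff : AffineOn K g)
    (hfg : ∀ κ ∈ K, f κ < g κ) :
    ∃ h : E → ℝ, ContinuousOn h K ∧ AffineOn K h ∧
      ∀ κ ∈ K, f κ < h κ ∧ h κ < g κ := by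
  obtain ⟨φ, a, hφ⟩ := exists_clm_add_const_between hKcp hf_usc (hf_aff.concaveOn hKcv) hg_lsc
    (hg_aff.convexOn hKcv) hfg
  exact ⟨fun x => a + φ x, by fun_prop, (φ : E →ₗ[ℝ] ℝ).affineOn_const_add K a, hφ⟩

/-- On a Choquet simplex `K`, if `f` is upper semicontinuous affine,
`g` lower semicontinuous affine, and `f < g` on `K`, then there is a continuous
affine `h` with `f < h < g` on `K`. -/
theorem stmt11 [LocallyConvexSpace ℝ E]
    (K : Set E) (hKcp : IsCompact K) (hKcv : Convex ℝ K)
    (hK : IsChoquetSimplex K)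
    (f g : E → ℝ)
    (hf_usc : UpperSemicontinuousOn f K) (hf_aff : AffineOn K f)
    (hg_lsc : LowerSemicontinuousOn g K) (hg_aff : AffineOn K g)
    (hfg : ∀ κ ∈ K, f κ < g κ) :
    ∃ h : E → ℝ, ContinuousOn h K ∧ AffineOn K h ∧
      ∀ κ ∈ K, f κ < h κ ∧ h κ < g κ :=
  stmt11_general K hKcp hKcv f g hf_usc hf_aff hg_lsc hg_aff hfg
end

section
/- Let A be a C*-algebra, D ⊂ A a commutative C*-subalgebra, and Φ : A → D a hereditary positive linear map (meaning a ∈ her(Φ(a)) for all positive a ∈ A). Then for every n ≥ 1 the map Φ ⊗ E_n : A ⊗ M_n → D ⊗ D_n is hereditary, where E_n : M_n → D_n is the canonical conditional expectation onto the diagonal matrices. -/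
/-!
Write `M = yᴴ y` and `dᵢ = Φ (M i i)`. Since `M i i ∈ her (dᵢ) ⊆ closure (A dᵢ)` and
`star (y k i) * y k i ≤ M i i`, every `b = y k i` lies in the closed left ideal `closure (A dᵢ)`:
with `m = M i i`, approximate `b` by `b (1 - (1 + K m)⁻¹) = b K (1 + K m)⁻¹ m`, the error satisfying
`‖b (1 + K m)⁻¹‖² ≤ ‖m (1 + K m)⁻²‖ ≤ 1 / K`. As `dᵢ` is self-adjoint, taking adjoints gives
`M i j = ∑ k, star (y k i) * y k j ∈ closure (dᵢ A dⱼ)`, and these entrywise conditions say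
exactly that `M` lies in the hereditary subalgebra generated by `diagonal d`.
-/

/-- The hereditary subalgebra generated by an element, as a set (norm/topological
closure of `d ∙ B ∙ d`). -/
def herSet' {B : Type*} [NonUnitalRing B] [TopologicalSpace B] (d : B) : Set B :=
  closure {x : B | ∃ y : B, x = d * y * d}

open Filter Topology

section ClosedOneSidedIdeals

variable {R : Type*} [TopologicalSpace R]

lemma mul_mem_closure_range_mul_right [Semigroup R] [ContinuousMul R] {d x : R} (c : R)
    (hx : x ∈ closure (Set.range (· * d))) : c * x ∈ closure (Set.range (· * d)) :=
  map_mem_closure (continuous_const_mul c) hx <| by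
    rintro _ ⟨y, rfl⟩
    exact ⟨c * y, mul_assoc c y d⟩

lemma star_mem_closure_range_mul_left [Mul R] [StarMul R] [ContinuousStar R] {d x : R}
    (hd : IsSelfAdjoint d) (hx : x ∈ closure (Set.range (· * d))) :
    star x ∈ closure (Set.range (d * ·)) :=
  map_mem_closure continuous_star hx <| by
    rintro _ ⟨y, rfl⟩
    exact ⟨star y, by simp only [star_mul, hd.star_eq]⟩

lemma mul_mem_closure_range_mul_mul [Semigroup R] [ContinuousMul R] {d d' x y : R}
    (hx : x ∈ closure (Set.range (d * ·))) (hy : y ∈ closure (Set.range (· * d'))) :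
    x * y ∈ closure (Set.range fun z => d * z * d') :=
  map_mem_closure₂ continuous_mul hx hy <| by
    rintro _ ⟨z, rfl⟩ _ ⟨z', rfl⟩
    exact ⟨z * z', by simp only [mul_assoc]⟩

lemma sum_mem_closure_range_mul_mul [NonUnitalNonAssocSemiring R] [ContinuousAdd R]
    {ι : Type*} (s : Finset ι) {d d' : R} {f : ι → R}
    (hf : ∀ k ∈ s, f k ∈ closure (Set.range fun z => d * z * d')) :
    ∑ k ∈ s, f k ∈ closure (Set.range fun z => d * z * d') := by
  refine Finset.sum_induction f _ (fun a b ha hb => ?_) (subset_closure ⟨0, by simp⟩) hf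
  refine map_mem_closure₂ continuous_add ha hb ?_
  rintro _ ⟨z, rfl⟩ _ ⟨z', rfl⟩
  exact ⟨z + z', by simp only [mul_add, add_mul]⟩

end ClosedOneSidedIdeals

lemma herSet'_subset_closure_range_mul_right {R : Type*} [NonUnitalRing R] [TopologicalSpace R]
    (d : R) : herSet' d ⊆ closure (Set.range (· * d)) :=
  closure_mono <| by
    rintro _ ⟨y, rfl⟩
    exact ⟨d * y, rfl⟩

lemma mem_herSet'_diagonal_iff {R ι : Type*} [NonUnitalRing R] [TopologicalSpace R]
    [Fintype ι] [DecidableEq ι] {d : ι → R} {M : Matrix ι ι R} :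
    M ∈ herSet' (Matrix.diagonal d) ↔
      ∀ i j, M i j ∈ closure (Set.range fun z => d i * z * d j) := by
  have hset : {X : Matrix ι ι R | ∃ Y, X = Matrix.diagonal d * Y * Matrix.diagonal d} =
      Set.univ.pi fun i => Set.univ.pi fun j => Set.range fun z => d i * z * d j := by
    ext X
    constructor
    · rintro ⟨Y, rfl⟩ i - j -
      exact ⟨Y i j, by simp only [Matrix.mul_diagonal, Matrix.diagonal_mul]⟩
    · intro hX
      choose Y hY using fun i j => hX i (Set.mem_univ i) j (Set.mem_univ j)
      exact ⟨Matrix.of Y, Matrix.ext fun i j => by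
        simp only [Matrix.mul_diagonal, Matrix.diagonal_mul, Matrix.of_apply, hY]⟩
  have hpi (N : ι → ι → R) :
      N ∈ closure (Set.univ.pi fun i => Set.univ.pi fun j => Set.range fun z => d i * z * d j) ↔
        ∀ i j, N i j ∈ closure (Set.range fun z => d i * z * d j) := by
    simp only [closure_pi_set, Set.mem_univ_pi]
  rw [herSet', hset]
  exact hpi M

lemma Matrix.star_mul_self_le_conjTranspose_mul_self_apply {R m n : Type*} [NonUnitalSemiring R]
    [PartialOrder R] [StarRing R] [StarOrderedRing R] [Fintype m] (y : Matrix m n R) (k : m)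
    (i : n) : star (y k i) * y k i ≤ (y.conjTranspose * y) i i := by
  rw [Matrix.mul_apply]
  exact Finset.single_le_sum (f := fun k => star (y k i) * y k i)
    (fun k _ => star_mul_self_nonneg (y k i)) (Finset.mem_univ k)

section CStar

variable {A : Type*} [CStarAlgebra A] [PartialOrder A] [StarOrderedRing A]

lemma one_add_mul_pos_of_mem_spectrum {m : A} (hm : 0 ≤ m) {K t : ℝ} (hK : 0 ≤ K)
    (ht : t ∈ spectrum ℝ m) : 0 < 1 + K * t := by
  have := spectrum_nonneg_of_nonneg hm ht
  positivity

lemma continuousOn_inv_one_add_mul_spectrum {m : A} (hm : 0 ≤ m) {K : ℝ} (hK : 0 ≤ K) :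
    ContinuousOn (fun t : ℝ => (1 + K * t)⁻¹) (spectrum ℝ m) :=
  (continuousOn_const.add (continuousOn_const.mul continuousOn_id)).inv₀ fun _ ht =>
    (one_add_mul_pos_of_mem_spectrum hm hK ht).ne'

lemma one_sub_cfc_inv_one_add_mul {m : A} (hm : 0 ≤ m) {K : ℝ} (hK : 0 ≤ K) :
    1 - cfc (fun t : ℝ => (1 + K * t)⁻¹) m = cfc (fun t : ℝ => K * (1 + K * t)⁻¹) m * m := by
  have hcont := continuousOn_inv_one_add_mul_spectrum hm hK
  nth_rw 3 [← cfc_id' ℝ m]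
  rw [← cfc_mul (fun t : ℝ => K * (1 + K * t)⁻¹) (fun t => t) m (continuousOn_const.mul hcont)
    continuousOn_id, ← cfc_const_one ℝ m, ← cfc_sub _ _ m continuousOn_const hcont]
  refine cfc_congr fun t ht => ?_
  have := (one_add_mul_pos_of_mem_spectrum hm hK ht).ne'
  field_simp
  ring

lemma norm_mul_cfc_inv_one_add_mul_sq_le {m b : A} (hb : star b * b ≤ m) {K : ℝ} (hK : 0 < K) :
    ‖b * cfc (fun t : ℝ => (1 + K * t)⁻¹) m‖ ^ 2 ≤ K⁻¹ := by
  have hm : 0 ≤ m := (star_mul_self_nonneg b).trans hb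
  have hcont := continuousOn_inv_one_add_mul_spectrum hm hK.le
  set e := cfc (fun t : ℝ => (1 + K * t)⁻¹) m
  have he : IsSelfAdjoint e := cfc_predicate _ m
  have hconj : star (b * e) * (b * e) ≤ e * m * e := by
    simpa only [star_mul, he.star_eq, mul_assoc] using star_left_conjugate_le_conjugate hb e
  have heme : e * m * e = cfc (fun t : ℝ => (1 + K * t)⁻¹ * t * (1 + K * t)⁻¹) m := by
    rw [cfc_mul (fun t : ℝ => (1 + K * t)⁻¹ * t) _ m (hcont.mul continuousOn_id) hcont,
      cfc_mul _ (fun t => t) m hcont continuousOn_id, cfc_id' ℝ m]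
  calc ‖b * e‖ ^ 2 = ‖star (b * e) * (b * e)‖ := by rw [CStarRing.norm_star_mul_self, sq]
    _ ≤ ‖e * m * e‖ := CStarAlgebra.norm_le_norm_of_nonneg_of_le (star_mul_self_nonneg _) hconj
    _ ≤ K⁻¹ := by
      rw [heme]
      refine norm_cfc_le (by positivity) fun t ht => ?_
      have ht0 : 0 ≤ t := spectrum_nonneg_of_nonneg hm ht
      have hpos := one_add_mul_pos_of_mem_spectrum hm hK.le ht
      rw [Real.norm_of_nonneg (by positivity), inv_mul_eq_div, ← div_eq_mul_inv, div_div,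
        div_le_iff₀ (by positivity), inv_mul_eq_div, le_div_iff₀ hK]
      nlinarith [mul_nonneg hK.le ht0]

lemma mem_closure_range_mul_right_of_star_mul_self_le {d m b : A}
    (hm : m ∈ closure (Set.range (· * d))) (hb : star b * b ≤ m) :
    b ∈ closure (Set.range (· * d)) := by
  have hm0 : 0 ≤ m := (star_mul_self_nonneg b).trans hb
  set e : ℝ → A := fun K => cfc (fun t : ℝ => (1 + K * t)⁻¹) m
  have hsmall : Tendsto (fun K => b * e K) atTop (𝓝 0) := by
    rw [tendsto_zero_iff_norm_tendsto_zero]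
    have hsq : Tendsto (fun K => ‖b * e K‖ ^ 2) atTop (𝓝 0) :=
      squeeze_zero' (.of_forall fun _ => sq_nonneg _)
        ((eventually_gt_atTop 0).mono fun _ hK => norm_mul_cfc_inv_one_add_mul_sq_le hb hK)
        tendsto_inv_atTop_zero
    simpa using hsq.sqrt
  have hmem : ∀ K ≥ 0, b - b * e K ∈ closure (Set.range (· * d)) := fun K hK => by
    rw [← mul_one_sub, one_sub_cfc_inv_one_add_mul hm0 hK, ← mul_assoc]
    exact mul_mem_closure_range_mul_right _ hm
  simpa using isClosed_closure.mem_of_tendsto (hsmall.const_sub b)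
    ((eventually_ge_atTop 0).mono hmem)

end CStar

theorem stmt12_general {A : Type*} [CStarAlgebra A] [PartialOrder A] [StarOrderedRing A]
    (Φ : A →ₗ[ℂ] A)
    (hpos : ∀ x : A, 0 ≤ x → 0 ≤ Φ x)
    (hher : ∀ a : A, 0 ≤ a → a ∈ herSet' (Φ a))
    (n : ℕ)
    (M : Matrix (Fin n) (Fin n) A)
    (hM : ∃ y : Matrix (Fin n) (Fin n) A, M = y.conjTranspose * y) :
    M ∈ herSet' (Matrix.diagonal fun i => Φ (M i i)) := by
  obtain ⟨y, rfl⟩ := hM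
  have hle := y.star_mul_self_le_conjTranspose_mul_self_apply
  have hdiag_nonneg (i : Fin n) : 0 ≤ (y.conjTranspose * y) i i :=
    (star_mul_self_nonneg _).trans (hle i i)
  set d : Fin n → A := fun i => Φ ((y.conjTranspose * y) i i)
  have hcol (i k : Fin n) : y k i ∈ closure (Set.range (· * d i)) :=
    mem_closure_range_mul_right_of_star_mul_self_le
      (herSet'_subset_closure_range_mul_right _ (hher _ (hdiag_nonneg i))) (hle k i)
  refine mem_herSet'_diagonal_iff.mpr fun i j => ?_
  rw [Matrix.mul_apply]
  refine sum_mem_closure_range_mul_mul _ fun k _ => mul_mem_closure_range_mul_mul ?_ (hcol j k)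
  exact star_mem_closure_range_mul_left (.of_nonneg (hpos _ (hdiag_nonneg i))) (hcol i k)

/-- If `D ⊂ A` is a commutative C*-subalgebra and `Φ : A → D` is a
hereditary positive linear map, then for every `n ≥ 1` the map
`Φ ⊗ E_n : A ⊗ M_n → D ⊗ D_n`, sending a matrix `M` over `A` to the diagonal matrix
with entries `Φ (M i i)`, is hereditary: every positive matrix `M` (i.e. `M = yᴴy`)
lies in the hereditary subalgebra of `M_n(A)` generated by its image. -/
theorem stmt12 {A : Type*} [CStarAlgebra A] [PartialOrder A] [StarOrderedRing A]
    (D : StarSubalgebra ℂ A)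
    (hcomm : ∀ x ∈ D, ∀ y ∈ D, x * y = y * x)
    (Φ : A →ₗ[ℂ] A)
    (hrange : ∀ x : A, Φ x ∈ D)
    (hpos : ∀ x : A, 0 ≤ x → 0 ≤ Φ x)
    (hher : ∀ a : A, 0 ≤ a → a ∈ herSet' (Φ a))
    (n : ℕ) (hn : 1 ≤ n)
    (M : Matrix (Fin n) (Fin n) A)
    (hM : ∃ y : Matrix (Fin n) (Fin n) A, M = y.conjTranspose * y) :
    M ∈ herSet' (Matrix.diagonal fun i => Φ (M i i)) :=
  stmt12_general Φ hpos hher n M hM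
end

section
/- Let A be a C*-algebra, D ⊂ A a commutative C*-subalgebra, n ≥ 1, and let d = Σ_{i=1}^n d_i ⊗ e_{ii} ∈ D ⊗ D_n with each d_i ∈ D positive. Then the hereditary C*-subalgebra of A ⊗ M_n generated by d equals the closed linear span of the sets {a ⊗ e_{ij} : a ∈ closure(d_i A d_j)} over all 1 ≤ i, j ≤ n. -/
theorem LinearMap.coe_range_mulLeftRight {R A : Type*} [CommSemiring R] [NonUnitalSemiring A]
    [Module R A] [SMulCommClass R A A] [IsScalarTower R A A] (a b : A) :
    (range (mulLeftRight R (a, b)) : Set A) = {z | ∃ y, z = a * y * b} := by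
  ext
  simp [eq_comm]

namespace Matrix

variable {m n R A : Type*}

theorem closure_setOf_forall_apply_mem [TopologicalSpace A] (T : m → n → Set A) :
    closure {M : Matrix m n A | ∀ i j, M i j ∈ T i j} =
      {M | ∀ i j, M i j ∈ closure (T i j)} := by
  have hpi (S : m → n → Set A) :
      {M : m → n → A | ∀ i j, M i j ∈ S i j} = Set.univ.pi fun i => Set.univ.pi (S i) := by
    ext
    simp
  change closure {M : m → n → A | ∀ i j, M i j ∈ T i j} = {M | ∀ i j, M i j ∈ closure (T i j)}
  simp only [hpi, closure_pi_set]

variable [Fintype m] [Fintype n] [DecidableEq m] [DecidableEq n]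

theorem coe_span_single_mem_eq [Semiring R] [AddCommMonoid A] [Module R A]
    (P : m → n → Submodule R A) :
    (Submodule.span R {M : Matrix m n A | ∃ (i : m) (j : n) (a : A), a ∈ P i j ∧
      M = single i j a} : Set (Matrix m n A)) = {M | ∀ i j, M i j ∈ P i j} := by
  refine subset_antisymm (fun M hM => ?_) fun M hM => ?_
  · induction hM using Submodule.span_induction with
    | mem _ h =>
      obtain ⟨i, j, a, ha, rfl⟩ := h
      intro k l
      by_cases h : i = k ∧ j = l
      · obtain ⟨rfl, rfl⟩ := h
        simpa using ha
      · simp [single_apply_of_ne _ _ _ _ _ h]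
    | zero => simp
    | add _ _ _ _ hM hN => exact fun i j => add_mem (hM i j) (hN i j)
    | smul r _ _ hM => exact fun i j => Submodule.smul_mem _ r (hM i j)
  · rw [matrix_eq_sum_single M]
    exact Submodule.sum_mem _ fun i _ => Submodule.sum_mem _ fun j _ =>
      Submodule.subset_span ⟨i, j, M i j, hM i j, rfl⟩

theorem diagonal_mul_mul_diagonal_apply [NonUnitalSemiring A] (v : m → A) (y : Matrix m n A)
    (w : n → A) (i : m) (j : n) : (diagonal v * y * diagonal w) i j = v i * y i j * w j := by
  simp [diagonal_mul, mul_diagonal]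

theorem setOf_eq_diagonal_mul_mul_diagonal [NonUnitalSemiring A] (v : m → A) (w : n → A) :
    {x : Matrix m n A | ∃ y : Matrix m n A, x = diagonal v * y * diagonal w} =
      {M | ∀ i j, M i j ∈ {z : A | ∃ y, z = v i * y * w j}} := by
  ext M
  refine ⟨?_, fun hM => ?_⟩
  · rintro ⟨y, rfl⟩ i j
    exact ⟨y i j, diagonal_mul_mul_diagonal_apply v y w i j⟩
  · choose y hy using hM
    exact ⟨of y, ext fun i j => by rw [diagonal_mul_mul_diagonal_apply, hy, of_apply]⟩

theorem herSet'_diagonal [NonUnitalRing A] [TopologicalSpace A] (v : n → A) :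
    herSet' (diagonal v) = {M | ∀ i j, M i j ∈ closure {z : A | ∃ y, z = v i * y * v j}} := by
  rw [herSet', setOf_eq_diagonal_mul_mul_diagonal, closure_setOf_forall_apply_mem]

end Matrix

theorem stmt13_general {A : Type*} [CStarAlgebra A]
    (n : ℕ)
    (dv : Fin n → A) :
    herSet' (Matrix.diagonal dv) =
      closure (Submodule.span ℂ
        {M : Matrix (Fin n) (Fin n) A | ∃ (i j : Fin n) (a : A),
          a ∈ closure {z : A | ∃ y : A, z = dv i * y * dv j} ∧
          M = Matrix.single i j a} : Set (Matrix (Fin n) (Fin n) A)) := by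
  have hspan := Matrix.coe_span_single_mem_eq fun i j : Fin n =>
    (LinearMap.range (LinearMap.mulLeftRight ℂ (dv i, dv j))).topologicalClosure
  simp only [← SetLike.mem_coe, Submodule.topologicalClosure_coe,
    LinearMap.coe_range_mulLeftRight] at hspan
  rw [hspan, ← Matrix.herSet'_diagonal, herSet', closure_closure]

/-- For a diagonal matrix `d = Σ d_i ⊗ e_{ii}` over a commutative
C*-subalgebra `D ⊂ A` with `d_i ≥ 0`, the hereditary subalgebra of `M_n(A)`
generated by `d` is the closed linear span of the matrices `a ⊗ e_{ij}` with
`a ∈ closure (d_i A d_j)`. -/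
theorem stmt13 {A : Type*} [CStarAlgebra A] [PartialOrder A] [StarOrderedRing A]
    (D : StarSubalgebra ℂ A)
    (hcomm : ∀ x ∈ D, ∀ y ∈ D, x * y = y * x)
    (n : ℕ) (hn : 1 ≤ n)
    (dv : Fin n → A) (hdD : ∀ i, dv i ∈ D) (hdpos : ∀ i, 0 ≤ dv i) :
    herSet' (Matrix.diagonal dv) =
      closure (Submodule.span ℂ
        {M : Matrix (Fin n) (Fin n) A | ∃ (i j : Fin n) (a : A),
          a ∈ closure {z : A | ∃ y : A, z = dv i * y * dv j} ∧
          M = Matrix.single i j a} : Set (Matrix (Fin n) (Fin n) A)) :=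
  stmt13_general n dv
end
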